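/- arXiv:1112.5738 — 4 statements merged into one kernel-verified Lean document; each statement's English description precedes it below -/
import Mathlib

section
/- Consider the 3-dimensional Lie algebra ea with basis X₁, X₂, X₃ and only nonzero bracket [X₃, X₁] = X₁. Define t_ε by t_ε(X₂) = εX₂, t_ε(X₁ + X₂) = X₁ + X₂, t_ε(X₃) = -εX₃. Then for all basis elements the limit lim_{ε→0⁺} t_ε⁻¹([t_ε(X), t_ε(Y)]) exists, and the resulting contracted bracket satisfies [X₃, X₁ + X₂]₀ = X₂ with all other brackets among X₂, X₁+X₂, X₃ vanishing; in particular the contracted Lie algebra is isomorphic to the Heisenberg Lie algebra. -/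
open Filter Topology

/-!
Antisymmetry pins down both brackets from their values on the basis (coordinates are numbered
from 1 here and from 0 in the code):
`b u v = (u₃v₁ - u₁v₃) X₁` and `bH u v = (u₃v₂ - u₂v₃) X₁`. The conditions on `t ε` force
`t ε v = (v₁, (1 - ε) v₁ + ε v₂, -ε v₃)`, hence
`(t ε)⁻¹ (b (t ε x) (t ε y)) = (x₁y₃ - x₃y₁) (ε X₁ - (1 - ε) X₂)`, which is affine in `ε` and tends to
`(x₃y₁ - x₁y₃) X₂`. Swapping the first two coordinates carries this bracket to `bH`.
-/

theorem pi_fin_three_eq_sum_smul {R : Type*} [CommRing R] (w : Fin 3 → R) :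
    w = w 0 • ![1, 0, 0] + w 1 • ![0, 1, 0] + w 2 • ![0, 0, 1] := by
  ext i; fin_cases i <;> simp

namespace LinearMap

theorem isAlt_of_antisymm {R M N : Type*} [Field R] [NeZero (2 : R)]
    [AddCommGroup M] [Module R M] [AddCommGroup N] [Module R N] {B : M →ₗ[R] M →ₗ[R] N}
    (hB : ∀ x y, B x y = -B y x) : B.IsAlt := by
  intro x
  have h2 : (2 : R) • B x x = 0 := by
    rw [two_smul]
    nth_rewrite 1 [hB]
    exact neg_add_cancel _
  exact (smul_eq_zero.mp h2).resolve_left two_ne_zero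

theorem IsAlt.apply_fin_three {R N : Type*} [CommRing R] [AddCommGroup N] [Module R N]
    {B : (Fin 3 → R) →ₗ[R] (Fin 3 → R) →ₗ[R] N} (hB : B.IsAlt) (u v : Fin 3 → R) :
    B u v = (u 0 * v 1 - u 1 * v 0) • B ![1, 0, 0] ![0, 1, 0]
      + (u 0 * v 2 - u 2 * v 0) • B ![1, 0, 0] ![0, 0, 1]
      + (u 1 * v 2 - u 2 * v 1) • B ![0, 1, 0] ![0, 0, 1] := by
  conv_lhs => rw [pi_fin_three_eq_sum_smul u, pi_fin_three_eq_sum_smul v]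
  simp only [map_add, map_smul, add_apply, smul_apply, hB.self_eq_zero]
  rw [← hB.neg ![1, 0, 0] ![0, 1, 0], ← hB.neg ![1, 0, 0] ![0, 0, 1],
    ← hB.neg ![0, 1, 0] ![0, 0, 1]]
  simp only [smul_zero, add_zero, zero_add, smul_neg]
  module

end LinearMap

theorem contraction_apply_eq {ε : ℝ} {T : (Fin 3 → ℝ) →ₗ[ℝ] (Fin 3 → ℝ)}
    (h2 : T ![0, 1, 0] = ε • ![0, 1, 0])
    (h12 : T (![1, 0, 0] + ![0, 1, 0]) = ![1, 0, 0] + ![0, 1, 0])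
    (h3 : T ![0, 0, 1] = -(ε • ![0, 0, 1])) (v : Fin 3 → ℝ) :
    T v = ![v 0, (1 - ε) * v 0 + ε * v 1, -(ε * v 2)] := by
  have h1 : T ![1, 0, 0] = ![1, 0, 0] + ![0, 1, 0] - ε • ![0, 1, 0] := by
    rw [← h12, ← h2, ← map_sub, add_sub_cancel_right]
  rw [pi_fin_three_eq_sum_smul v]
  simp only [map_add, map_smul, h1, h2, h3]
  ext i; fin_cases i <;> simp <;> ring

theorem contraction_conj_bracket_eq {b : (Fin 3 → ℝ) →ₗ[ℝ] (Fin 3 → ℝ) →ₗ[ℝ] (Fin 3 → ℝ)}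
    (hb : ∀ u v, b u v = (u 2 * v 0 - u 0 * v 2) • ![1, 0, 0]) {ε : ℝ}
    {T : (Fin 3 → ℝ) ≃ₗ[ℝ] (Fin 3 → ℝ)}
    (hT : ∀ v, T v = ![v 0, (1 - ε) * v 0 + ε * v 1, -(ε * v 2)]) (x y : Fin 3 → ℝ) :
    T.symm (b (T x) (T y)) = (x 0 * y 2 - x 2 * y 0) • (ε • ![1, 0, 0] - (1 - ε) • ![0, 1, 0]) := by
  rw [LinearEquiv.symm_apply_eq, hb, hT, hT, hT]
  ext i; fin_cases i <;> simp <;> ring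

def eaContractedBracket : (Fin 3 → ℝ) →ₗ[ℝ] (Fin 3 → ℝ) →ₗ[ℝ] (Fin 3 → ℝ) :=
  LinearMap.mk₂ ℝ (fun x y => (x 2 * y 0 - x 0 * y 2) • ![0, 1, 0])
    (fun _ _ _ => by simp only [Pi.add_apply]; module)
    (fun _ _ _ => by simp only [Pi.smul_apply, smul_eq_mul]; module)
    (fun _ _ _ => by simp only [Pi.add_apply]; module)
    (fun _ _ _ => by simp only [Pi.smul_apply, smul_eq_mul]; module)

theorem eaContractedBracket_apply (x y : Fin 3 → ℝ) :
    eaContractedBracket x y = (x 2 * y 0 - x 0 * y 2) • ![0, 1, 0] := rfl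

theorem exists_linearEquiv_eaContractedBracket_eq
    {bH : (Fin 3 → ℝ) →ₗ[ℝ] (Fin 3 → ℝ) →ₗ[ℝ] (Fin 3 → ℝ)}
    (hbH : ∀ u v, bH u v = (u 2 * v 1 - u 1 * v 2) • ![1, 0, 0]) :
    ∃ e : (Fin 3 → ℝ) ≃ₗ[ℝ] (Fin 3 → ℝ), ∀ x y, e (eaContractedBracket x y) = bH (e x) (e y) := by
  refine ⟨LinearEquiv.funCongrLeft ℝ ℝ (Equiv.swap 0 1), fun x y => ?_⟩
  rw [hbH, eaContractedBracket_apply]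
  ext i; fin_cases i <;> simp [LinearMap.funLeft, Equiv.swap_apply_of_ne_of_ne]

/-- The IW-contraction of the Lie algebra `ea` (`[X₃,X₁] = X₁`) along
`t_ε(X₂) = εX₂`, `t_ε(X₁+X₂) = X₁+X₂`, `t_ε(X₃) = −εX₃` exists, satisfies
`[X₃, X₁+X₂]₀ = X₂` with all other brackets among `X₂, X₁+X₂, X₃` vanishing,
and is isomorphic to the Heisenberg Lie algebra (`[Y₃,Y₂] = Y₁`). -/
theorem stmt_1
    (b bH : (Fin 3 → ℝ) →ₗ[ℝ] (Fin 3 → ℝ) →ₗ[ℝ] (Fin 3 → ℝ))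
    (X₁ X₂ X₃ : Fin 3 → ℝ)
    (hX₁ : X₁ = ![1,0,0]) (hX₂ : X₂ = ![0,1,0]) (hX₃ : X₃ = ![0,0,1])
    -- the Lie algebra ea
    (hanti : ∀ x y, b x y = - b y x)
    (h31 : b X₃ X₁ = X₁) (h32 : b X₃ X₂ = 0) (h12 : b X₁ X₂ = 0)
    -- the Heisenberg Lie algebra
    (hHanti : ∀ x y, bH x y = - bH y x)
    (hH32 : bH X₃ X₂ = X₁) (hH31 : bH X₃ X₁ = 0) (hH21 : bH X₂ X₁ = 0)
    -- the contraction maps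
    (t : ℝ → ((Fin 3 → ℝ) ≃ₗ[ℝ] (Fin 3 → ℝ)))
    (ht2 : ∀ ε ∈ Set.Ioc (0:ℝ) 1, t ε X₂ = ε • X₂)
    (ht12 : ∀ ε ∈ Set.Ioc (0:ℝ) 1, t ε (X₁ + X₂) = X₁ + X₂)
    (ht3 : ∀ ε ∈ Set.Ioc (0:ℝ) 1, t ε X₃ = -(ε • X₃)) :
    ∃ b₀ : (Fin 3 → ℝ) →ₗ[ℝ] (Fin 3 → ℝ) →ₗ[ℝ] (Fin 3 → ℝ),
      (∀ x y, Tendsto (fun ε : ℝ => (t ε).symm (b (t ε x) (t ε y)))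
        (𝓝[Set.Ioc (0:ℝ) 1] 0) (𝓝 (b₀ x y))) ∧
      b₀ X₃ (X₁ + X₂) = X₂ ∧
      b₀ X₃ X₂ = 0 ∧ b₀ (X₁ + X₂) X₂ = 0 ∧
      ∃ e : (Fin 3 → ℝ) ≃ₗ[ℝ] (Fin 3 → ℝ), ∀ x y, e (b₀ x y) = bH (e x) (e y) := by
  subst hX₁ hX₂ hX₃
  have hb (u v : Fin 3 → ℝ) : b u v = (u 2 * v 0 - u 0 * v 2) • ![1, 0, 0] := by
    have hAlt := LinearMap.isAlt_of_antisymm hanti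
    rw [hAlt.apply_fin_three, h12, ← hAlt.neg, h31, ← hAlt.neg, h32]
    module
  have hbH (u v : Fin 3 → ℝ) : bH u v = (u 2 * v 1 - u 1 * v 2) • ![1, 0, 0] := by
    have hAlt := LinearMap.isAlt_of_antisymm hHanti
    rw [hAlt.apply_fin_three, ← hAlt.neg, hH21, ← hAlt.neg, hH31, ← hAlt.neg, hH32]
    module
  refine ⟨eaContractedBracket, fun x y => ?_, ?_, ?_, ?_,
    exists_linearEquiv_eaContractedBracket_eq hbH⟩
  · refine tendsto_nhdsWithin_congr (fun ε hε => (contraction_conj_bracket_eq hb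
      (contraction_apply_eq (T := (t ε).toLinearMap) (ht2 ε hε) (ht12 ε hε) (ht3 ε hε)) x y).symm) ?_
    refine (Continuous.tendsto' (by fun_prop) 0 _ ?_).mono_left nhdsWithin_le_nhds
    rw [eaContractedBracket_apply]
    module
  all_goals
    rw [eaContractedBracket_apply]
    ext i; fin_cases i <;> simp
end

section
/- Let λ ∈ ℝ, a, b ∈ ℝ. For the Lie algebra g(λ) with brackets [X₃,X₁]=X₁, [X₃,X₂]=λX₂, the assignments X₁ ↦ multiplication by i·a·e^x, X₂ ↦ multiplication by i·b·e^{λx}, X₃ ↦ d/dx define a Lie algebra homomorphism from g(λ) into the endomorphisms of C_c^∞(ℝ, ℂ) with the commutator bracket. -/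
/-- The operators `ρ(X₁) = i·a·e^x`, `ρ(X₂) = i·b·e^{λx}`, `ρ(X₃) = d/dx` on
`C_c^∞(ℝ,ℂ)` realize a Lie algebra homomorphism from `g(λ)`
(`[X₃,X₁]=X₁`, `[X₃,X₂]=λX₂`, `[X₁,X₂]=0`). -/
theorem stmt_10 (lam a b : ℝ)
    (f : ℝ → ℂ) (hf : ContDiff ℝ (⊤ : ℕ∞) f) (hsupp : HasCompactSupport f) :
    -- [ρ(X₃), ρ(X₁)] = ρ(X₁)
    (∀ x : ℝ, deriv (fun y : ℝ => Complex.I * (a : ℂ) * (Real.exp y : ℂ) * f y) x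
        - Complex.I * (a : ℂ) * (Real.exp x : ℂ) * deriv f x
      = Complex.I * (a : ℂ) * (Real.exp x : ℂ) * f x) ∧
    -- [ρ(X₃), ρ(X₂)] = λ·ρ(X₂)
    (∀ x : ℝ, deriv (fun y : ℝ => Complex.I * (b : ℂ) * (Real.exp (lam * y) : ℂ) * f y) x
        - Complex.I * (b : ℂ) * (Real.exp (lam * x) : ℂ) * deriv f x
      = (lam : ℂ) * (Complex.I * (b : ℂ) * (Real.exp (lam * x) : ℂ) * f x)) ∧
    -- [ρ(X₁), ρ(X₂)] = 0
    (∀ x : ℝ, Complex.I * (a : ℂ) * (Real.exp x : ℂ)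
          * (Complex.I * (b : ℂ) * (Real.exp (lam * x) : ℂ) * f x)
        - Complex.I * (b : ℂ) * (Real.exp (lam * x) : ℂ)
          * (Complex.I * (a : ℂ) * (Real.exp x : ℂ) * f x) = 0) := by
  have hfd : ∀ x : ℝ, HasDerivAt f (deriv f x) x := fun x =>
    (hf.differentiable (by simp) x).hasDerivAt
  refine ⟨fun x => ?_, fun x => ?_, fun x => by ring⟩
  · have h1 : HasDerivAt (fun y : ℝ => Complex.I * (a : ℂ) * (Real.exp y : ℂ))
        (Complex.I * (a : ℂ) * (Real.exp x : ℂ)) x := by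
      have := (Real.hasDerivAt_exp x).ofReal_comp
      simpa using this.const_mul (Complex.I * (a : ℂ))
    have h := (h1.mul (hfd x)).deriv
    simp only [Pi.mul_def] at h; rw [h]; ring
  · have h1 : HasDerivAt (fun y : ℝ => Complex.I * (b : ℂ) * (Real.exp (lam * y) : ℂ))
        ((lam : ℂ) * (Complex.I * (b : ℂ) * (Real.exp (lam * x) : ℂ))) x := by
      have h0 : HasDerivAt (fun y : ℝ => Real.exp (lam * y)) (lam * Real.exp (lam * x)) x := by
        simpa [mul_comm, Function.comp_def] using ((Real.hasDerivAt_exp (lam * x)).comp x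
          ((hasDerivAt_id x).const_mul lam))
      have := h0.ofReal_comp
      simpa [mul_comm, mul_assoc, mul_left_comm] using this.const_mul (Complex.I * (b : ℂ))
    have h := (h1.mul (hfd x)).deriv
    simp only [Pi.mul_def] at h; rw [h]; ring
end

section
/- For the Lie algebra c with brackets [X₃,X₁]=X₁, [X₃,X₂]=X₁+X₂, and any a, b ∈ ℝ, the assignments X₁ ↦ multiplication by i·a·e^x, X₂ ↦ multiplication by (i·a·x·e^x + i·b·e^x), X₃ ↦ d/dx define a Lie algebra homomorphism from c into the endomorphisms of C_c^∞(ℝ, ℂ). -/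
/-- The operators `ρ(X₁) = i·a·e^x`, `ρ(X₂) = i·a·x·e^x + i·b·e^x`,
`ρ(X₃) = d/dx` on `C_c^∞(ℝ,ℂ)` realize a Lie algebra homomorphism from `c`
(`[X₃,X₁]=X₁`, `[X₃,X₂]=X₁+X₂`, `[X₁,X₂]=0`). -/
theorem stmt_11 (a b : ℝ)
    (f : ℝ → ℂ) (hf : ContDiff ℝ (⊤ : ℕ∞) f) (hsupp : HasCompactSupport f) :
    -- [ρ(X₃), ρ(X₁)] = ρ(X₁)
    (∀ x : ℝ, deriv (fun y : ℝ => Complex.I * (a : ℂ) * (Real.exp y : ℂ) * f y) x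
        - Complex.I * (a : ℂ) * (Real.exp x : ℂ) * deriv f x
      = Complex.I * (a : ℂ) * (Real.exp x : ℂ) * f x) ∧
    -- [ρ(X₃), ρ(X₂)] = ρ(X₁) + ρ(X₂)
    (∀ x : ℝ, deriv (fun y : ℝ =>
          (Complex.I * (a : ℂ) * (y : ℂ) * (Real.exp y : ℂ)
            + Complex.I * (b : ℂ) * (Real.exp y : ℂ)) * f y) x
        - (Complex.I * (a : ℂ) * (x : ℂ) * (Real.exp x : ℂ)
            + Complex.I * (b : ℂ) * (Real.exp x : ℂ)) * deriv f x
      = Complex.I * (a : ℂ) * (Real.exp x : ℂ) * f x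
        + (Complex.I * (a : ℂ) * (x : ℂ) * (Real.exp x : ℂ)
            + Complex.I * (b : ℂ) * (Real.exp x : ℂ)) * f x) ∧
    -- [ρ(X₁), ρ(X₂)] = 0
    (∀ x : ℝ, Complex.I * (a : ℂ) * (Real.exp x : ℂ)
          * ((Complex.I * (a : ℂ) * (x : ℂ) * (Real.exp x : ℂ)
              + Complex.I * (b : ℂ) * (Real.exp x : ℂ)) * f x)
        - (Complex.I * (a : ℂ) * (x : ℂ) * (Real.exp x : ℂ)
              + Complex.I * (b : ℂ) * (Real.exp x : ℂ))
          * (Complex.I * (a : ℂ) * (Real.exp x : ℂ) * f x) = 0) := by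

  have hfd : ∀ x, HasDerivAt f (deriv f x) x := fun x =>
    ((hf.differentiable (by simp)) x).hasDerivAt
  have hexp : ∀ x : ℝ, HasDerivAt (fun y : ℝ => (Real.exp y : ℂ)) (Real.exp x) x := by
    intro x
    exact_mod_cast (Real.hasDerivAt_exp x).ofReal_comp
  have hid : ∀ x : ℝ, HasDerivAt (fun y : ℝ => (y : ℂ)) 1 x := fun x =>
    (hasDerivAt_id x).ofReal_comp
  refine ⟨fun x => ?_, fun x => ?_, fun x => ?_⟩
  · have h1 : HasDerivAt (fun y : ℝ => Complex.I * (a : ℂ) * (Real.exp y : ℂ) * f y)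
        (Complex.I * a * Real.exp x * f x + Complex.I * a * Real.exp x * deriv f x) x := by
      have := (((hexp x).const_mul (Complex.I * (a : ℂ))).mul (hfd x))
      exact this.congr_deriv (by ring)
    rw [h1.deriv]; ring
  · have h2 : HasDerivAt (fun y : ℝ =>
        (Complex.I * (a : ℂ) * (y : ℂ) * (Real.exp y : ℂ)
          + Complex.I * (b : ℂ) * (Real.exp y : ℂ)) * f y)
        ((Complex.I * a * Real.exp x + Complex.I * a * x * Real.exp x
            + Complex.I * b * Real.exp x) * f x
          + (Complex.I * a * x * Real.exp x + Complex.I * b * Real.exp x) * deriv f x) x := by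
      have hg : HasDerivAt (fun y : ℝ =>
          Complex.I * (a : ℂ) * (y : ℂ) * (Real.exp y : ℂ)
            + Complex.I * (b : ℂ) * (Real.exp y : ℂ))
          (Complex.I * a * Real.exp x + Complex.I * a * x * Real.exp x
            + Complex.I * b * Real.exp x) x := by
        have := (((hid x).const_mul (Complex.I * (a : ℂ))).mul (hexp x)).add
          ((hexp x).const_mul (Complex.I * (b : ℂ)))
        exact this.congr_deriv (by ring)
      exact (hg.mul (hfd x)).congr_deriv rfl
    rw [h2.deriv]; ring
  · ring
end

section
/- For λ ∈ ℝ and a, b ∈ ℝ, consider the Lie algebra l(λ) with brackets [X₃,X₁]=X₂+λX₁ and [X₃,X₂]=−X₁+λX₂. The assignments X₁ ↦ multiplication by i·e^{λx}(a·cos x + b·sin x), X₂ ↦ multiplication by i·e^{λx}(−a·sin x + b·cos x), X₃ ↦ d/dx define a Lie algebra homomorphism from l(λ) into the endomorphisms of C_c^∞(ℝ, ℂ). -/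
/-- Multiplication by `i·e^{λx}(a·cos x + b·sin x)`, multiplication by
`i·e^{λx}(−a·sin x + b·cos x)` and `d/dx` on `C_c^∞(ℝ,ℂ)` realize a Lie
algebra homomorphism from `l(λ)` (`[X₃,X₁]=X₂+λX₁`, `[X₃,X₂]=−X₁+λX₂`,
`[X₁,X₂]=0`). -/
theorem stmt_12 (lam a b : ℝ)
    (f : ℝ → ℂ) (hf : ContDiff ℝ (⊤ : ℕ∞) f) (hsupp : HasCompactSupport f)
    (m₁ m₂ : ℝ → ℂ)
    (hm₁ : m₁ = fun y : ℝ => Complex.I * (Real.exp (lam * y) : ℂ)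
      * ((a : ℂ) * (Real.cos y : ℂ) + (b : ℂ) * (Real.sin y : ℂ)))
    (hm₂ : m₂ = fun y : ℝ => Complex.I * (Real.exp (lam * y) : ℂ)
      * (-(a : ℂ) * (Real.sin y : ℂ) + (b : ℂ) * (Real.cos y : ℂ))) :
    -- [ρ(X₃), ρ(X₁)] = ρ(X₂) + λ·ρ(X₁)
    (∀ x : ℝ, deriv (fun y : ℝ => m₁ y * f y) x - m₁ x * deriv f x
      = m₂ x * f x + (lam : ℂ) * (m₁ x * f x)) ∧
    -- [ρ(X₃), ρ(X₂)] = −ρ(X₁) + λ·ρ(X₂)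
    (∀ x : ℝ, deriv (fun y : ℝ => m₂ y * f y) x - m₂ x * deriv f x
      = -(m₁ x * f x) + (lam : ℂ) * (m₂ x * f x)) ∧
    -- [ρ(X₁), ρ(X₂)] = 0
    (∀ x : ℝ, m₁ x * (m₂ x * f x) - m₂ x * (m₁ x * f x) = 0) := by
  have hfd : ∀ x : ℝ, HasDerivAt f (deriv f x) x := fun x =>
    ((hf.differentiable (by simp)) x).hasDerivAt
  have he : ∀ x : ℝ, HasDerivAt (fun y : ℝ => ((Real.exp (lam * y) : ℝ) : ℂ))
      ((lam : ℂ) * (Real.exp (lam * x) : ℂ)) x := by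
    intro x
    have h0 : HasDerivAt (fun y : ℝ => Real.exp (lam * y)) (Real.exp (lam * x) * (lam * 1)) x :=
      ((hasDerivAt_id x).const_mul lam).exp
    have := h0.ofReal_comp
    simp only [mul_one] at this
    simpa [mul_comm] using this
  have hcos : ∀ x : ℝ, HasDerivAt (fun y : ℝ => ((Real.cos y : ℝ) : ℂ))
      (-(Real.sin x : ℂ)) x := fun x => by
    simpa using (Real.hasDerivAt_cos x).ofReal_comp
  have hsin : ∀ x : ℝ, HasDerivAt (fun y : ℝ => ((Real.sin y : ℝ) : ℂ))
      ((Real.cos x : ℂ)) x := fun x => by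
    simpa using (Real.hasDerivAt_sin x).ofReal_comp
  have hd1 : ∀ x : ℝ, HasDerivAt m₁ (m₂ x + (lam : ℂ) * m₁ x) x := by
    intro x
    rw [hm₁, hm₂]
    have h : HasDerivAt (fun y : ℝ => Complex.I * (Real.exp (lam * y) : ℂ)
        * ((a : ℂ) * (Real.cos y : ℂ) + (b : ℂ) * (Real.sin y : ℂ)))
        ((Complex.I * ((lam : ℂ) * (Real.exp (lam * x) : ℂ)))
          * ((a : ℂ) * (Real.cos x : ℂ) + (b : ℂ) * (Real.sin x : ℂ))
          + Complex.I * (Real.exp (lam * x) : ℂ)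
          * ((a : ℂ) * (-(Real.sin x : ℂ)) + (b : ℂ) * (Real.cos x : ℂ))) x :=
      (((he x).const_mul Complex.I).mul
        (((hcos x).const_mul (a : ℂ)).add ((hsin x).const_mul (b : ℂ))))
    convert h using 1
    ring
  have hd2 : ∀ x : ℝ, HasDerivAt m₂ (-(m₁ x) + (lam : ℂ) * m₂ x) x := by
    intro x
    rw [hm₁, hm₂]
    have h : HasDerivAt (fun y : ℝ => Complex.I * (Real.exp (lam * y) : ℂ)
        * (-(a : ℂ) * (Real.sin y : ℂ) + (b : ℂ) * (Real.cos y : ℂ)))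
        ((Complex.I * ((lam : ℂ) * (Real.exp (lam * x) : ℂ)))
          * (-(a : ℂ) * (Real.sin x : ℂ) + (b : ℂ) * (Real.cos x : ℂ))
          + Complex.I * (Real.exp (lam * x) : ℂ)
          * (-(a : ℂ) * (Real.cos x : ℂ) + (b : ℂ) * (-(Real.sin x : ℂ)))) x :=
      (((he x).const_mul Complex.I).mul
        (((hsin x).const_mul (-(a : ℂ))).add ((hcos x).const_mul (b : ℂ))))
    convert h using 1
    ring
  refine ⟨fun x => ?_, fun x => ?_, fun x => by ring⟩
  · rw [show (fun y : ℝ => m₁ y * f y) = m₁ * f from rfl, ((hd1 x).mul (hfd x)).deriv]; ring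
  · rw [show (fun y : ℝ => m₂ y * f y) = m₂ * f from rfl, ((hd2 x).mul (hfd x)).deriv]; ring
end
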